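/- arXiv:2210.01793 — 2 statements merged into one kernel-verified Lean document; each statement's English description precedes it below -/
import Mathlib

section
/- Let k ≥ 3 and n ≥ 2 be integers, and for 1 ≤ i ≤ n−1 let η_i be the divisor on the hinge graph H_{k,n} with η_i(v_{i,1}) = 1, η_i(v_{i+1,1}) = −1 and η_i = 0 elsewhere. If a_1, …, a_{n−1} are integers with 0 ≤ a_i ≤ k−2 for all i and the divisor a_1·η_1 + ⋯ + a_{n−1}·η_{n−1} lies in Prin(H_{k,n}), then a_i = 0 for all i. -/
/-- Vertex set of the hinge graph `H_{k,n}`: two shared vertices `u, w`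
(encoded as `Sum.inl 0`, `Sum.inl 1`) together with the vertices
`v_{i,j}` (encoded as `Sum.inr (i, j)`, zero-indexed). -/
abbrev HingeVertex (k n : ℕ) : Type := Fin 2 ⊕ (Fin n × Fin (k - 2))

/-- The shared vertex `u`. -/
def hu (k n : ℕ) : HingeVertex k n := Sum.inl 0

/-- The shared vertex `w`. -/
def hw (k n : ℕ) : HingeVertex k n := Sum.inl 1

/-- The vertex `v_{i+1,j+1}` of the `i+1`-st cycle (zero-indexed here). -/
def hv (k n : ℕ) (i : Fin n) (j : Fin (k - 2)) : HingeVertex k n := Sum.inr (i, j)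

/-- The base (Boolean) edge relation of the hinge graph: `u-w`, `u-v_{i,1}`,
`v_{i,j}-v_{i,j+1}`, `v_{i,k-2}-w`. -/
def hingeRelB (k n : ℕ) : HingeVertex k n → HingeVertex k n → Bool
  | Sum.inl a, Sum.inl b => a != b
  | Sum.inl a, Sum.inr p => a == 0 && p.2.val == 0
  | Sum.inr p, Sum.inl b => b == 1 && p.2.val == k - 3
  | Sum.inr p, Sum.inr q => p.1 == q.1 && q.2.val == p.2.val + 1

/-- The hinge graph `H_{k,n}`: `n` cycles of length `k` glued along the edge `{u, w}`. -/
def Hinge (k n : ℕ) : SimpleGraph (HingeVertex k n) :=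
  SimpleGraph.fromRel (fun x y => hingeRelB k n x y = true)

instance (k n : ℕ) : DecidableRel (Hinge k n).Adj := fun x y =>
  inferInstanceAs (Decidable (x ≠ y ∧ (hingeRelB k n x y = true ∨ hingeRelB k n y x = true)))

/-- The number of spanning trees of a graph `G`: the number of edge sets `s ⊆ E(G)`
whose associated spanning subgraph (on all of `V`) is connected and acyclic. -/
noncomputable def spanningTreeCount {V : Type*} (G : SimpleGraph V) : ℕ :=
  Set.ncard {s : Set (Sym2 V) | s ⊆ G.edgeSet ∧ (SimpleGraph.fromEdgeSet s).IsTree}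

/-- The degree homomorphism on divisors. -/
def degHom (V : Type*) [Fintype V] : (V → ℤ) →+ ℤ where
  toFun D := ∑ v, D v
  map_zero' := by simp
  map_add' x y := by simp [Finset.sum_add_distrib]

/-- The group `Div⁰` of degree-zero divisors. -/
def Div0 (V : Type*) [Fintype V] : AddSubgroup (V → ℤ) := (degHom V).ker

/-- The group of principal divisors: the image of the Laplacian `L = Deg - A`. -/
def Prin {V : Type*} [Fintype V] [DecidableEq V] (G : SimpleGraph V) [DecidableRel G.Adj] :
    AddSubgroup (V → ℤ) :=
  AddMonoidHom.range (Matrix.mulVecLin (G.lapMatrix ℤ)).toAddMonoidHom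

/-- The critical group `K(G) = Div⁰(G) / Prin(G)`. -/
def CriticalGroup {V : Type*} [Fintype V] [DecidableEq V] (G : SimpleGraph V)
    [DecidableRel G.Adj] : Type _ :=
  Div0 V ⧸ ((Prin G).addSubgroupOf (Div0 V))

noncomputable instance {V : Type*} [Fintype V] [DecidableEq V] (G : SimpleGraph V)
    [DecidableRel G.Adj] : AddCommGroup (CriticalGroup G) :=
  inferInstanceAs (AddCommGroup (Div0 V ⧸ ((Prin G).addSubgroupOf (Div0 V))))

/-- The class of a degree-zero divisor in the critical group. -/
def divisorClass {V : Type*} [Fintype V] [DecidableEq V] (G : SimpleGraph V)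
    [DecidableRel G.Adj] (D : V → ℤ) (hD : D ∈ Div0 V) : CriticalGroup G :=
  (QuotientAddGroup.mk (⟨D, hD⟩ : Div0 V) :
    Div0 V ⧸ ((Prin G).addSubgroupOf (Div0 V)))

/-- The divisor with value `1` at `x`, `-1` at `y` (for `x ≠ y`) and `0` elsewhere. -/
def pointDiff {V : Type*} [DecidableEq V] (x y : V) : V → ℤ :=
  fun z => (if z = x then 1 else 0) - (if z = y then 1 else 0)

lemma pointDiff_mem {V : Type*} [Fintype V] [DecidableEq V] (x y : V) :
    pointDiff x y ∈ Div0 V := by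
  simp [Div0, AddMonoidHom.mem_ker, degHom, pointDiff, Finset.sum_sub_distrib]

/-!
For each branch `p`, the integer vector `y_p` equal to `1 - m + [i = p] (n + k - 1) m` at
distance `m` from `u` along branch `i` (and to `2 - k` at `w`) has Laplacian exactly
`(k - 1)(n + k - 1) (δ_{v_{p,k-2}} - δ_w)`, and restricts to `(n + k - 1) δ_{v_{p,1}}` on the
vertices `v_{i,1}`. Pairing a principal divisor `D = L x` supported on the `v_{i,1}` with `y_p`
and using the symmetry of `L` gives `D(v_{p,1}) = (k - 1)(x(v_{p,k-2}) - x(w))`. The value of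
`∑ a_i η_i` at `v_{p,1}` is `a_p - a_{p-1}`, so induction on `p` together with
`0 ≤ a_p < k - 1` gives `a_p = 0`.
-/

section

open Finset Matrix SimpleGraph

theorem SimpleGraph.lapMatrix_mulVec_apply_of_neighborFinset_eq {V R : Type*} [Fintype V]
    [DecidableEq V] [NonAssocRing R] {G : SimpleGraph V} [DecidableRel G.Adj] {v : V}
    {s : Finset V} (hs : G.neighborFinset v = s) (f : V → R) :
    (G.lapMatrix R *ᵥ f) v = s.card * f v - ∑ z ∈ s, f z := by
  rw [lapMatrix_mulVec_apply, ← card_neighborFinset_eq_degree, hs]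

theorem SimpleGraph.dotProduct_lapMatrix_mulVec_comm {V R : Type*} [Fintype V] [DecidableEq V]
    [CommRing R] (G : SimpleGraph V) [DecidableRel G.Adj] (x y : V → R) :
    y ⬝ᵥ (G.lapMatrix R *ᵥ x) = (G.lapMatrix R *ᵥ y) ⬝ᵥ x := by
  rw [dotProduct_mulVec, ← mulVec_transpose, (G.isSymm_lapMatrix R).eq, dotProduct_comm]

theorem Matrix.dotProduct_congr_of_eqOn_support {V R : Type*} [Fintype V] [Semiring R]
    {y y' D : V → R} (h : Set.EqOn y y' (Function.support D)) : y ⬝ᵥ D = y' ⬝ᵥ D :=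
  sum_congr rfl fun v _ => by
    by_cases hv : D v = 0
    · simp [hv]
    · rw [h hv]

theorem pointDiff_dotProduct {V : Type*} [Fintype V] [DecidableEq V] (a b : V) (x : V → ℤ) :
    pointDiff a b ⬝ᵥ x = x a - x b := by
  simp [pointDiff, dotProduct, sub_mul, sum_sub_distrib]

theorem support_sum_smul_pointDiff_subset {ι V : Type*} [DecidableEq V] (s : Finset ι)
    (a : ι → ℤ) (f g : ι → V) :
    Function.support (∑ i ∈ s, a i • pointDiff (f i) (g i)) ⊆
      Set.range f ∪ Set.range g := by
  intro v hv
  by_contra hfg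
  simp only [Set.mem_union, Set.mem_range, not_or, not_exists] at hfg
  exact hv (by simp [pointDiff, fun i => Ne.symm (hfg.1 i), fun i => Ne.symm (hfg.2 i)])

namespace Hinge

/-- The vertex at distance `m` from `u` along the `i`-th cycle: `u` for `m = 0`, `v_{i,m}` (that
is, `hv k n i ⟨m - 1, _⟩`) for `1 ≤ m ≤ k - 2`, and `w` beyond. -/
def branchVertex (k n : ℕ) (i : Fin n) (m : ℕ) : HingeVertex k n :=
  if m = 0 then hu k n else if h : m - 1 < k - 2 then hv k n i ⟨m - 1, h⟩ else hw k n

variable {k n : ℕ}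

def firstVertex (hk : 3 ≤ k) (i : Fin n) : HingeVertex k n :=
  hv k n i ⟨0, Nat.sub_pos_of_lt hk⟩

def lastVertex (hk : 3 ≤ k) (i : Fin n) : HingeVertex k n :=
  hv k n i ⟨k - 3, Nat.sub_lt_sub_left hk (Nat.lt_succ_self 2)⟩

lemma branchVertex_succ (i : Fin n) (j : Fin (k - 2)) :
    branchVertex k n i (j + 1) = hv k n i j := by
  simp [branchVertex]

@[simp] lemma hv_inj {i i' : Fin n} {j j' : Fin (k - 2)} :
    hv k n i j = hv k n i' j' ↔ i = i' ∧ j = j' := by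
  simp [hv]

@[simp] lemma hv_ne_hu (i : Fin n) (j : Fin (k - 2)) : hv k n i j ≠ hu k n := by simp [hv, hu]

@[simp] lemma hv_ne_hw (i : Fin n) (j : Fin (k - 2)) : hv k n i j ≠ hw k n := by simp [hv, hw]

lemma neighborFinset_hu (hk : 3 ≤ k) :
    (Hinge k n).neighborFinset (hu k n) = insert (hw k n) (univ.image (firstVertex hk)) := by
  ext z
  rw [mem_neighborFinset]
  rcases z with a | ⟨i, j⟩
  · fin_cases a <;> simp [Hinge, hingeRelB, firstVertex, hv, hu, hw]
  · simp [Hinge, hingeRelB, firstVertex, hv, hu, hw, Fin.ext_iff]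
    omega

lemma neighborFinset_hw (hk : 3 ≤ k) :
    (Hinge k n).neighborFinset (hw k n) = insert (hu k n) (univ.image (lastVertex hk)) := by
  ext z
  rw [mem_neighborFinset]
  rcases z with a | ⟨i, j⟩
  · fin_cases a <;> simp [Hinge, hingeRelB, lastVertex, hv, hu, hw]
  · simp [Hinge, hingeRelB, lastVertex, hv, hu, hw, Fin.ext_iff]
    omega

lemma neighborFinset_hv (i : Fin n) (j : Fin (k - 2)) :
    (Hinge k n).neighborFinset (hv k n i j) =
      {branchVertex k n i j, branchVertex k n i (j + 2)} := by
  ext z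
  rw [mem_neighborFinset]
  rcases z with a | ⟨i', j'⟩
  · fin_cases a <;> simp [Hinge, hingeRelB, hv, hu, hw, branchVertex] <;> split_ifs <;> simp <;>
      omega
  · simp [Hinge, hingeRelB, hv, hu, hw, branchVertex]
    split_ifs <;> simp [Fin.ext_iff] <;> omega

lemma lapMatrix_mulVec_hu (hk : 3 ≤ k) (f : HingeVertex k n → ℤ) :
    ((Hinge k n).lapMatrix ℤ *ᵥ f) (hu k n) =
      (n + 1) * f (hu k n) - (f (hw k n) + ∑ i, f (firstVertex hk i)) := by
  have hnot : hw k n ∉ univ.image (firstVertex hk) := by simp [firstVertex]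
  have hinj : Function.Injective (firstVertex (n := n) hk) := fun i i' h => by
    simpa [firstVertex] using h
  rw [lapMatrix_mulVec_apply_of_neighborFinset_eq (neighborFinset_hu hk),
    card_insert_of_notMem hnot, card_image_of_injective _ hinj, sum_insert hnot,
    sum_image fun i _ i' _ h => hinj h]
  simp

lemma lapMatrix_mulVec_hw (hk : 3 ≤ k) (f : HingeVertex k n → ℤ) :
    ((Hinge k n).lapMatrix ℤ *ᵥ f) (hw k n) =
      (n + 1) * f (hw k n) - (f (hu k n) + ∑ i, f (lastVertex hk i)) := by
  have hnot : hu k n ∉ univ.image (lastVertex hk) := by simp [lastVertex]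
  have hinj : Function.Injective (lastVertex (n := n) hk) := fun i i' h => by
    simpa [lastVertex] using h
  rw [lapMatrix_mulVec_apply_of_neighborFinset_eq (neighborFinset_hw hk),
    card_insert_of_notMem hnot, card_image_of_injective _ hinj, sum_insert hnot,
    sum_image fun i _ i' _ h => hinj h]
  simp

lemma lapMatrix_mulVec_hv (i : Fin n) (j : Fin (k - 2)) (f : HingeVertex k n → ℤ) :
    ((Hinge k n).lapMatrix ℤ *ᵥ f) (hv k n i j) =
      2 * f (hv k n i j) - (f (branchVertex k n i j) + f (branchVertex k n i (j + 2))) := by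
  have hne : branchVertex k n i j ≠ branchVertex k n i (j + 2) := by
    have := j.isLt
    simp only [branchVertex]
    split_ifs <;> simp [hu, hv, hw] <;> omega
  rw [lapMatrix_mulVec_apply_of_neighborFinset_eq (neighborFinset_hv i j), card_pair hne,
    sum_pair hne]
  simp

def testVector (k n : ℕ) (p : Fin n) : HingeVertex k n → ℤ
  | Sum.inl a => if a = 0 then 1 else 2 - k
  | Sum.inr (i, j) => -j + if i = p then ((n : ℤ) + k - 1) * (j + 1) else 0

lemma testVector_branchVertex (p i : Fin n) {m : ℕ} (hm : m ≤ k - 1) :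
    testVector k n p (branchVertex k n i m) =
      1 - (m : ℤ) + if i = p ∧ m ≤ k - 2 then ((n : ℤ) + k - 1) * m else 0 := by
  rcases m with _ | m
  · simp [testVector, branchVertex, hu]
  · by_cases hmk : m < k - 2
    · simp [branchVertex, hmk, testVector, hv, show m + 1 ≤ k - 2 by omega]
    · have hkm : (k : ℤ) = m + 2 := by omega
      simp [branchVertex, hmk, testVector, hw, show ¬ m + 1 ≤ k - 2 by omega, hkm]

lemma lapMatrix_mulVec_testVector (hk : 3 ≤ k) (p : Fin n) :
    (Hinge k n).lapMatrix ℤ *ᵥ testVector k n p =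
      ((k - 1) * (n + k - 1) : ℤ) • pointDiff (lastVertex hk p) (hw k n) := by
  ext v
  rcases v with a | ⟨i, j⟩
  · obtain rfl | rfl : a = 0 ∨ a = 1 := by omega
    · change (_ *ᵥ _) (hu k n) = _
      rw [lapMatrix_mulVec_hu hk]
      simp [testVector, firstVertex, lastVertex, hu, hw, hv, pointDiff]
      ring
    · change (_ *ᵥ _) (hw k n) = _
      rw [lapMatrix_mulVec_hw hk]
      simp [testVector, lastVertex, hu, hw, hv, pointDiff, sum_add_distrib,
        Nat.cast_sub (by omega : 3 ≤ k)]
      ring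
  · change (_ *ᵥ _) (hv k n i j) = _
    have := j.isLt
    rw [lapMatrix_mulVec_hv, ← branchVertex_succ, testVector_branchVertex _ _ (by omega),
      testVector_branchVertex _ _ (by omega), testVector_branchVertex _ _ (by omega)]
    rcases eq_or_ne i p with rfl | hip
    · by_cases hj : (j : ℕ) + 2 ≤ k - 2
      · simp [pointDiff, lastVertex, hv, hw, hj, Fin.ext_iff, show (j : ℕ) ≠ k - 3 by omega]
        ring
      · have hkj : (k : ℤ) = j + 3 := by omega
        simp [pointDiff, lastVertex, hv, hw, hj, show k - 3 = (j : ℕ) by omega, hkj]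
        ring
    · simp [pointDiff, lastVertex, hv, hw, hip]
      ring

theorem dvd_apply_firstVertex_of_mem_prin (hk : 3 ≤ k) {D : HingeVertex k n → ℤ}
    (hD : D ∈ Prin (Hinge k n)) (hsupp : Function.support D ⊆ Set.range (firstVertex hk))
    (p : Fin n) : (k - 1 : ℤ) ∣ D (firstVertex hk p) := by
  obtain ⟨x, rfl⟩ := hD
  set c : ℤ := n + k - 1
  have hc : c ≠ 0 := by omega
  have heqOn : Set.EqOn (testVector k n p) (c • Pi.single (firstVertex hk p) 1)
      (Function.support ((Hinge k n).lapMatrix ℤ *ᵥ x)) := by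
    rintro _ hv'
    obtain ⟨i, rfl⟩ := hsupp hv'
    rcases eq_or_ne i p with rfl | hip
    · simp [testVector, firstVertex, hv, c]
    · simp [testVector, firstVertex, hv, hip]
  have key : c * ((Hinge k n).lapMatrix ℤ *ᵥ x) (firstVertex hk p) =
      c * ((k - 1) * (x (lastVertex hk p) - x (hw k n))) :=
    calc c * ((Hinge k n).lapMatrix ℤ *ᵥ x) (firstVertex hk p)
        = (c • Pi.single (firstVertex hk p) 1) ⬝ᵥ ((Hinge k n).lapMatrix ℤ *ᵥ x) := by
          rw [← Pi.single_smul, single_dotProduct, smul_eq_mul, mul_one]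
      _ = testVector k n p ⬝ᵥ ((Hinge k n).lapMatrix ℤ *ᵥ x) :=
          (dotProduct_congr_of_eqOn_support heqOn).symm
      _ = c * ((k - 1) * (x (lastVertex hk p) - x (hw k n))) := by
          rw [dotProduct_lapMatrix_mulVec_comm, lapMatrix_mulVec_testVector hk, smul_dotProduct,
            pointDiff_dotProduct, smul_eq_mul]
          ring
  exact ⟨_, mul_left_cancel₀ hc key⟩

end Hinge

end

/-- Let `k ≥ 3`, `n ≥ 2`, and for `1 ≤ i ≤ n-1` let `η_i` be the divisor with
value `1` at `v_{i,1}`, `-1` at `v_{i+1,1}` and `0` elsewhere. If integers `a_i` with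
`0 ≤ a_i ≤ k - 2` make `a_1 • η_1 + ⋯ + a_{n-1} • η_{n-1}` principal, then all `a_i = 0`. -/
theorem hinge_eta_linearIndependent (k n : ℕ) (hk : 3 ≤ k)
    (a : Fin (n - 1) → ℤ) (ha : ∀ i, 0 ≤ a i ∧ a i ≤ (k : ℤ) - 2)
    (hmem : (∑ i : Fin (n - 1), a i •
        pointDiff (hv k n ⟨i.val, by have := i.isLt; omega⟩ ⟨0, by omega⟩)
          (hv k n ⟨i.val + 1, by have := i.isLt; omega⟩ ⟨0, by omega⟩)) ∈
      Prin (Hinge k n)) :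
    ∀ i, a i = 0 := by
  have hdvd := Hinge.dvd_apply_firstVertex_of_mem_prin hk hmem <|
    (support_sum_smul_pointDiff_subset _ _ _ _).trans <| Set.union_subset
      (Set.range_subset_iff.2 fun i => ⟨_, rfl⟩) (Set.range_subset_iff.2 fun i => ⟨_, rfl⟩)
  intro p
  induction p using WellFoundedLT.induction with
  | _ p ih =>
  have hp := hdvd ⟨p, by omega⟩
  simp only [Finset.sum_apply, Pi.smul_apply, smul_eq_mul, pointDiff, Hinge.firstVertex,
    Hinge.hv_inj, Fin.ext_iff, and_true] at hp
  -- the coefficient `a_{p-1}` of `η_{p-1}` at `v_{p,1}` vanishes by induction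
  rw [Finset.sum_eq_single p (fun i _ hip => ?_) (by simp), if_pos rfl, if_neg (by omega),
    sub_zero, mul_one] at hp
  · exact Int.eq_zero_of_abs_lt_dvd hp (by rw [abs_of_nonneg (ha p).1]; linarith [(ha p).2])
  · have hne : (p : ℕ) ≠ i := fun h => hip (Fin.ext h).symm
    by_cases hsucc : (p : ℕ) = i + 1
    · simp [ih i (Fin.lt_def.2 (by omega))]
    · simp [hne, hsucc]
end

section
/- For all integers k ≥ 3 and n ≥ 2, the critical group K(H_{k,n}) of the hinge graph H_{k,n} is isomorphic as an abelian group to (ℤ/(k−1)ℤ)^{n−2} ⊕ ℤ/((k−1)(k+n−1))ℤ. -/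
/-!
Write `k = m + 3` and let the graph have `n + 2` arms: arm `i` is the path
`u, v_{i,1}, …, v_{i,m+1}, w` of length `p = m + 2`. The moment of a divisor `D` along arm `i` is
`M_i(D) = ∑_t t • D(t-th vertex of arm i)`. Summation by parts turns the moment of a principal
divisor `L x` into `p • x(v_{i,m+1}) - x(u) - (p - 1) • x(w)`, so all `M_i(L x)` agree modulo `p`,
and `B(D) = ∑_i M_i(D) + p • D(w) - (p + n + 2) • M_0(D)` is `p (p + n + 2) (x(w) - x(v_{0,m+1}))`
on principal divisors. Hence `D ↦ ((M_{c+2}(D) - M_0(D) mod p)_c, B(D) mod p (p + n + 2))`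
factors through the critical group; it is onto, as one sees on differences of chips placed on the
first vertices of the arms. Conversely, if it kills a divisor `D` of degree zero, then `B(D)` fixes
a value `δ` with `M_i(D) ≡ δ` modulo `p` for all `i`, and `D = L x` for the potential `x` with
`x(u) = 0`, `x(w) = δ` that solves the discrete Poisson equation `-x'' = D` along each arm: the
congruences are exactly what makes every arm reach `δ` at `w`.
-/

open Finset Matrix

section Divisors

variable {V : Type*} [Fintype V] [DecidableEq V]

theorem SimpleGraph.sum_lapMatrix_mulVec {R : Type*} [CommRing R] (G : SimpleGraph V)
    [DecidableRel G.Adj] (x : V → R) : ∑ v, (G.lapMatrix R *ᵥ x) v = 0 :=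
  calc ∑ v, (G.lapMatrix R *ᵥ x) v = (fun _ ↦ 1) ⬝ᵥ (G.lapMatrix R *ᵥ x) := by simp [dotProduct]
    _ = ((G.lapMatrix R)ᵀ *ᵥ fun _ ↦ 1) ⬝ᵥ x := by rw [dotProduct_mulVec, mulVec_transpose]
    _ = 0 := by
      rw [(G.isSymm_lapMatrix R).eq, G.lapMatrix_mulVec_const_eq_zero, zero_dotProduct]

theorem SimpleGraph.lapMatrix_mulVec_apply_eq_sum_sub {R : Type*} [CommRing R]
    (G : SimpleGraph V) [DecidableRel G.Adj] (x : V → R) (v : V) :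
    (G.lapMatrix R *ᵥ x) v = ∑ z ∈ G.neighborFinset v, (x v - x z) := by
  rw [G.lapMatrix_mulVec_apply, sum_sub_distrib, sum_const, G.card_neighborFinset_eq_degree,
    nsmul_eq_mul]

theorem eq_of_sum_eq_of_forall_ne {R : Type*} [AddCommGroup R] {D E : V → R} (v₀ : V)
    (hsum : ∑ v, D v = ∑ v, E v) (h : ∀ v ≠ v₀, D v = E v) : D = E := by
  have hrest : ∑ v ∈ univ.erase v₀, D v = ∑ v ∈ univ.erase v₀, E v :=
    sum_congr rfl fun v hv => h v (ne_of_mem_erase hv)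
  funext v
  by_cases hv : v = v₀
  · subst hv
    rw [← add_sum_erase _ _ (mem_univ v), ← add_sum_erase _ _ (mem_univ v), hrest] at hsum
    exact add_right_cancel hsum
  · exact h v hv

theorem CriticalGroup.nonempty_addEquiv_of_surjective {A : Type*} [AddCommGroup A]
    (G : SimpleGraph V) [DecidableRel G.Adj] (ψ : (V → ℤ) →+ A)
    (hsurj : ∀ a, ∃ D ∈ Div0 V, ψ D = a) (hker : ∀ D ∈ Div0 V, ψ D = 0 ↔ D ∈ Prin G) :
    Nonempty (CriticalGroup G ≃+ A) := by
  let Ψ := ψ.comp (Div0 V).subtype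
  have hΨ : Function.Surjective Ψ := fun a => by
    obtain ⟨D, hD, rfl⟩ := hsurj a
    exact ⟨⟨D, hD⟩, rfl⟩
  have hker' : Ψ.ker = (Prin G).addSubgroupOf (Div0 V) := by
    ext ⟨D, hD⟩
    exact hker D hD
  exact ⟨(QuotientAddGroup.quotientAddEquivOfEq hker'.symm).trans
    (QuotientAddGroup.quotientKerEquivOfSurjective Ψ hΨ)⟩

end Divisors

section PathLaplacian

variable {R : Type*} [CommRing R]

def pathLaplacian (P : ℕ → R) (t : ℕ) : R := 2 * P (t + 1) - P t - P (t + 2)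

theorem sum_range_pathLaplacian (P : ℕ → R) (r : ℕ) :
    ∑ t ∈ range r, pathLaplacian P t = P 1 - P 0 + P r - P (r + 1) := by
  induction r with
  | zero => simp
  | succ r ih => rw [sum_range_succ, ih, pathLaplacian]; ring

theorem sum_range_mul_pathLaplacian (P : ℕ → R) (r : ℕ) :
    ∑ t ∈ range r, ((t : R) + 1) * pathLaplacian P t = (r + 1) * P r - r * P (r + 1) - P 0 := by
  induction r with
  | zero => simp
  | succ r ih => rw [sum_range_succ, ih, pathLaplacian]; push_cast; ring

def pathSolve (a b : R) (d : ℕ → R) : ℕ → R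
  | 0 => a
  | 1 => b
  | t + 2 => 2 * pathSolve a b d (t + 1) - pathSolve a b d t - d t

theorem pathLaplacian_pathSolve (a b : R) (d : ℕ → R) (t : ℕ) :
    pathLaplacian (pathSolve a b d) t = d t := by
  simp only [pathLaplacian, pathSolve]; ring

theorem pathSolve_end_eq (d : ℕ → R) (k : ℕ) {r δ : R}
    (h : δ - ∑ t ∈ range k, ((t : R) + 1) * d t = (k + 1) * r) :
    pathSolve 0 (∑ t ∈ range k, d t + r) d k = δ - r ∧
      pathSolve 0 (∑ t ∈ range k, d t + r) d (k + 1) = δ := by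
  set P := pathSolve 0 (∑ t ∈ range k, d t + r) d
  have hlap : ∀ t, pathLaplacian P t = d t := pathLaplacian_pathSolve _ _ _
  have h1 := sum_range_pathLaplacian P k
  have h2 := sum_range_mul_pathLaplacian P k
  simp only [hlap] at h1 h2
  have hP0 : P 0 = 0 := rfl
  have hP1 : P 1 = ∑ t ∈ range k, d t + r := rfl
  rw [hP0, hP1] at h1
  rw [hP0] at h2
  constructor
  · linear_combination (k : R) * h1 - h2 - h
  · linear_combination (k + 1 : R) * h1 - h2 - h

end PathLaplacian

namespace Hinge

variable {m n : ℕ}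

theorem adj_inl_inl (a b : Fin 2) :
    (Hinge (m + 3) (n + 2)).Adj (Sum.inl a) (Sum.inl b) ↔ a ≠ b := by
  rw [Hinge, SimpleGraph.fromRel_adj]
  simp [hingeRelB, ne_comm]

theorem adj_inl_inr (a : Fin 2) (i : Fin (n + 2)) (j : Fin (m + 1)) :
    (Hinge (m + 3) (n + 2)).Adj (Sum.inl a) (Sum.inr (i, j)) ↔
      a = 0 ∧ j.val = 0 ∨ a = 1 ∧ j.val = m := by
  rw [Hinge, SimpleGraph.fromRel_adj]
  simp [hingeRelB, -Fin.val_eq_zero_iff]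

theorem adj_inr_inr (i i' : Fin (n + 2)) (j j' : Fin (m + 1)) :
    (Hinge (m + 3) (n + 2)).Adj (Sum.inr (i, j)) (Sum.inr (i', j')) ↔
      i = i' ∧ (j'.val = j.val + 1 ∨ j.val = j'.val + 1) := by
  rw [Hinge, SimpleGraph.fromRel_adj]
  simp only [hingeRelB, Bool.and_eq_true, beq_iff_eq, ne_eq, Sum.inr.injEq, Prod.mk.injEq]
  grind

variable (m) in
def armVertex (i : Fin (n + 2)) (t : ℕ) : HingeVertex (m + 3) (n + 2) :=
  if t = 0 then Sum.inl 0 else if h : t ≤ m + 1 then Sum.inr (i, ⟨t - 1, by omega⟩) else Sum.inl 1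

theorem armVertex_zero (i : Fin (n + 2)) : armVertex m i 0 = Sum.inl 0 := rfl

theorem armVertex_succ (i : Fin (n + 2)) (j : Fin (m + 1)) :
    armVertex m i (j + 1) = Sum.inr (i, j) := by
  simp [armVertex, j.is_le]

theorem armVertex_self_add_two (i : Fin (n + 2)) : armVertex m i (m + 2) = Sum.inl 1 := by
  simp [armVertex]

theorem armVertex_ne_armVertex_add_two (i : Fin (n + 2)) {t : ℕ} (ht : t ≤ m) :
    armVertex m i t ≠ armVertex m i (t + 2) := by
  unfold armVertex
  split_ifs <;> simp_all
  omega

theorem neighborFinset_inr (i : Fin (n + 2)) (j : Fin (m + 1)) :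
    (Hinge (m + 3) (n + 2)).neighborFinset (Sum.inr (i, j)) =
      {armVertex m i j, armVertex m i (j + 2)} := by
  ext z
  rw [SimpleGraph.mem_neighborFinset, mem_insert, mem_singleton]
  rcases z with a | ⟨i', j'⟩
  · rw [SimpleGraph.adj_comm, adj_inl_inr]
    obtain ⟨j, hj⟩ := j
    unfold armVertex
    split_ifs <;> fin_cases a <;> simp_all <;> omega
  · rw [adj_inr_inr]
    obtain ⟨j, hj⟩ := j
    obtain ⟨j', hj'⟩ := j'
    replace hj' : j' < m + 1 := hj'
    unfold armVertex
    split_ifs <;> simp_all <;> omega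

theorem neighborFinset_inl_one :
    (Hinge (m + 3) (n + 2)).neighborFinset (Sum.inl 1) =
      insert (Sum.inl 0) (univ.image fun i => armVertex m i (m + 1)) := by
  ext z
  rw [SimpleGraph.mem_neighborFinset, mem_insert, mem_image]
  rcases z with a | ⟨i', j'⟩
  · rw [adj_inl_inl]
    fin_cases a <;> simp [armVertex]
  · rw [adj_inl_inr]
    simp [armVertex, Fin.ext_iff, eq_comm]

variable (m) in
def ofArms {R : Type*} (a b : R) (P : Fin (n + 2) → ℕ → R) : HingeVertex (m + 3) (n + 2) → R :=
  Sum.elim ![a, b] fun q => P q.1 (q.2 + 1)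

theorem ofArms_armVertex {R : Type*} {a b : R} {P : Fin (n + 2) → ℕ → R} {i : Fin (n + 2)}
    (h0 : P i 0 = a) (hend : P i (m + 2) = b) {t : ℕ} (ht : t ≤ m + 2) :
    ofArms m a b P (armVertex m i t) = P i t := by
  unfold armVertex
  split_ifs with ht0 ht1
  · rw [ht0, h0]; rfl
  · simp only [ofArms, Sum.elim_inr]
    congr 1
    omega
  · rw [show t = m + 2 by omega, hend]
    rfl

section Laplacian

variable {R : Type*} [CommRing R]

theorem lapMatrix_mulVec_inr (x : HingeVertex (m + 3) (n + 2) → R) (i : Fin (n + 2))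
    (j : Fin (m + 1)) :
    ((Hinge (m + 3) (n + 2)).lapMatrix R *ᵥ x) (Sum.inr (i, j)) =
      pathLaplacian (fun t => x (armVertex m i t)) j := by
  rw [SimpleGraph.lapMatrix_mulVec_apply_eq_sum_sub, neighborFinset_inr,
    sum_pair (armVertex_ne_armVertex_add_two i j.is_le), pathLaplacian, armVertex_succ]
  ring

theorem lapMatrix_mulVec_inl_one (x : HingeVertex (m + 3) (n + 2) → R) :
    ((Hinge (m + 3) (n + 2)).lapMatrix R *ᵥ x) (Sum.inl 1) =
      (x (Sum.inl 1) - x (Sum.inl 0)) + ∑ i, (x (Sum.inl 1) - x (armVertex m i (m + 1))) := by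
  rw [SimpleGraph.lapMatrix_mulVec_apply_eq_sum_sub, neighborFinset_inl_one,
    sum_insert (by simp [armVertex]), sum_image fun i _ i' _ h => by simpa [armVertex] using h]

end Laplacian

def moment (i : Fin (n + 2)) : (HingeVertex (m + 3) (n + 2) → ℤ) →+ ℤ where
  toFun D := ∑ j : Fin (m + 1), ((j : ℤ) + 1) * D (Sum.inr (i, j))
  map_zero' := by simp
  map_add' D E := by simp [mul_add, sum_add_distrib]

theorem moment_eq_sum_range (i : Fin (n + 2)) (D : HingeVertex (m + 3) (n + 2) → ℤ) :
    moment i D = ∑ t ∈ range (m + 1), ((t : ℤ) + 1) * D (armVertex m i (t + 1)) := by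
  rw [← Fin.sum_univ_eq_sum_range (fun t => ((t : ℤ) + 1) * D (armVertex m i (t + 1)))]
  simp only [armVertex_succ]
  rfl

theorem moment_lapMatrix_mulVec (x : HingeVertex (m + 3) (n + 2) → ℤ) (i : Fin (n + 2)) :
    moment i ((Hinge (m + 3) (n + 2)).lapMatrix ℤ *ᵥ x) =
      (m + 2) * x (armVertex m i (m + 1)) - (m + 1) * x (Sum.inl 1) - x (Sum.inl 0) := by
  simp only [moment, AddMonoidHom.coe_mk, ZeroHom.coe_mk, lapMatrix_mulVec_inr]
  rw [Fin.sum_univ_eq_sum_range (fun t => ((t : ℤ) + 1) * pathLaplacian _ t),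
    sum_range_mul_pathLaplacian, armVertex_zero, armVertex_self_add_two]
  push_cast
  ring

def bigInvariant : (HingeVertex (m + 3) (n + 2) → ℤ) →+ ℤ :=
  ∑ i, moment i + (m + 2 : ℤ) • Pi.evalAddMonoidHom (fun _ => ℤ) (Sum.inl 1) -
    (m + n + 4 : ℤ) • moment 0

theorem bigInvariant_apply (D : HingeVertex (m + 3) (n + 2) → ℤ) :
    bigInvariant D = ∑ i, moment i D + (m + 2) * D (Sum.inl 1) - (m + n + 4) * moment 0 D := by
  simp [bigInvariant]

theorem bigInvariant_lapMatrix_mulVec (x : HingeVertex (m + 3) (n + 2) → ℤ) :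
    bigInvariant ((Hinge (m + 3) (n + 2)).lapMatrix ℤ *ᵥ x) =
      (m + 2) * (m + n + 4) * (x (Sum.inl 1) - x (armVertex m 0 (m + 1))) := by
  simp only [bigInvariant_apply, moment_lapMatrix_mulVec, lapMatrix_mulVec_inl_one,
    sum_sub_distrib, ← mul_sum, sum_const, card_univ, Fintype.card_fin, nsmul_eq_mul]
  push_cast
  ring

theorem moment_one_sub_moment_zero (D : HingeVertex (m + 3) (n + 2) → ℤ) :
    moment 1 D - moment 0 D = bigInvariant D - ∑ c : Fin n, (moment c.succ.succ D - moment 0 D) -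
      (m + 2) * (D (Sum.inl 1) - moment 0 D) := by
  rw [bigInvariant_apply, Fin.sum_univ_succ, Fin.sum_univ_succ, Fin.succ_zero_eq_one,
    sum_sub_distrib, sum_const, card_univ, Fintype.card_fin, nsmul_eq_mul]
  ring

variable (m n) in
def invariant :
    (HingeVertex (m + 3) (n + 2) → ℤ) →+ (Fin n → ZMod (m + 2)) × ZMod ((m + 2) * (m + n + 4)) :=
  (AddMonoidHom.pi fun c => (Int.castAddHom _).comp (moment c.succ.succ - moment 0)).prod
    ((Int.castAddHom _).comp bigInvariant)

theorem invariant_apply (D : HingeVertex (m + 3) (n + 2) → ℤ) :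
    invariant m n D = (fun c => ((moment c.succ.succ D - moment 0 D : ℤ) : ZMod (m + 2)),
      ((bigInvariant D : ℤ) : ZMod ((m + 2) * (m + n + 4)))) := rfl

theorem invariant_eq_zero_iff (D : HingeVertex (m + 3) (n + 2) → ℤ) :
    invariant m n D = 0 ↔ (∀ c : Fin n, (m + 2 : ℤ) ∣ moment c.succ.succ D - moment 0 D) ∧
      (m + 2) * (m + n + 4 : ℤ) ∣ bigInvariant D := by
  simp only [invariant_apply, Prod.mk_eq_zero, funext_iff, Pi.zero_apply,
    ZMod.intCast_zmod_eq_zero_iff_dvd]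
  push_cast
  rfl

theorem invariant_lapMatrix_mulVec (x : HingeVertex (m + 3) (n + 2) → ℤ) :
    invariant m n ((Hinge (m + 3) (n + 2)).lapMatrix ℤ *ᵥ x) = 0 := by
  rw [invariant_eq_zero_iff, bigInvariant_lapMatrix_mulVec]
  refine ⟨fun c => ⟨x (armVertex m c.succ.succ (m + 1)) - x (armVertex m 0 (m + 1)), ?_⟩,
    dvd_mul_right _ _⟩
  rw [moment_lapMatrix_mulVec, moment_lapMatrix_mulVec]
  ring

theorem dvd_moment_sub_moment_zero {D : HingeVertex (m + 3) (n + 2) → ℤ}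
    (hD : invariant m n D = 0) (i : Fin (n + 2)) : (m + 2 : ℤ) ∣ moment i D - moment 0 D := by
  obtain ⟨hsmall, hbig⟩ := (invariant_eq_zero_iff D).1 hD
  induction i using Fin.cases with
  | zero => simp
  | succ j =>
    induction j using Fin.cases with
    | zero =>
      rw [Fin.succ_zero_eq_one, moment_one_sub_moment_zero]
      exact dvd_sub (dvd_sub ((dvd_mul_right _ _).trans hbig) (dvd_sum fun c _ => hsmall c))
        (dvd_mul_right _ _)
    | succ c => exact hsmall c

theorem moment_pointDiff (i i' j : Fin (n + 2)) :
    moment j (pointDiff (armVertex m i 1) (armVertex m i' 1)) =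
      (if j = i then 1 else 0) - (if j = i' then 1 else 0) := by
  simp [moment, pointDiff, armVertex]
  split_ifs <;> simp_all

theorem moment_pointDiff_inl (i j : Fin (n + 2)) :
    moment j (pointDiff (armVertex m i 1) (Sum.inl 0)) = if j = i then 1 else 0 := by
  simp [moment, pointDiff, armVertex]
  split_ifs <;> simp_all

theorem invariant_pointDiff_one_inl :
    invariant m n (pointDiff (armVertex m 1 1) (Sum.inl 0)) = (0, 1) := by
  have hw : pointDiff (armVertex m 1 1) (Sum.inl 0)
      (Sum.inl 1 : HingeVertex (m + 3) (n + 2)) = 0 := by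
    simp [pointDiff, armVertex]
  simp only [invariant_apply, bigInvariant_apply, moment_pointDiff_inl, hw]
  simp [Prod.ext_iff, funext_iff, Fin.succ_succ_ne_one]

theorem invariant_pointDiff_succ_succ_one (c : Fin n) :
    invariant m n (pointDiff (armVertex m c.succ.succ 1) (armVertex m 1 1)) =
      (Pi.single c 1, 0) := by
  have hw : pointDiff (armVertex m c.succ.succ 1) (armVertex m 1 1)
      (Sum.inl 1 : HingeVertex (m + 3) (n + 2)) = 0 := by
    simp [pointDiff, armVertex]
  simp only [invariant_apply, bigInvariant_apply, moment_pointDiff, hw]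
  simp [Prod.ext_iff, funext_iff, Pi.single_apply, Fin.succ_succ_ne_one,
    (Fin.succ_ne_zero c.succ).symm]

theorem exists_mem_div0_invariant_eq (a : (Fin n → ZMod (m + 2)) × ZMod ((m + 2) * (m + n + 4))) :
    ∃ D ∈ Div0 (HingeVertex (m + 3) (n + 2)), invariant m n D = a := by
  obtain ⟨f, y⟩ := a
  refine ⟨∑ c, (f c).val • pointDiff (armVertex m c.succ.succ 1) (armVertex m 1 1) +
    y.val • pointDiff (armVertex m 1 1) (Sum.inl 0), ?_, ?_⟩
  · exact add_mem (sum_mem fun c _ => nsmul_mem (pointDiff_mem _ _) _)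
      (nsmul_mem (pointDiff_mem _ _) _)
  · have : NeZero ((m + 2) * (m + n + 4)) := ⟨by positivity⟩
    simp only [map_add, map_sum, map_nsmul, invariant_pointDiff_one_inl,
      invariant_pointDiff_succ_succ_one]
    ext c
    · simp [Prod.fst_sum, Pi.single_apply, -nsmul_eq_mul]
    · simp [Prod.snd_sum]

theorem exists_lapMatrix_mulVec_eq (D : HingeVertex (m + 3) (n + 2) → ℤ) (hD : ∑ v, D v = 0)
    (δ : ℤ) (hδ : (m + n + 4) * δ = ∑ i, moment i D + (m + 2) * D (Sum.inl 1))
    (hdvd : ∀ i, (m + 2 : ℤ) ∣ δ - moment i D) :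
    ∃ x, (Hinge (m + 3) (n + 2)).lapMatrix ℤ *ᵥ x = D := by
  choose r hr using hdvd
  set d : Fin (n + 2) → ℕ → ℤ := fun i t => D (armVertex m i (t + 1))
  set P : Fin (n + 2) → ℕ → ℤ := fun i => pathSolve 0 (∑ t ∈ range (m + 1), d i t + r i) (d i)
  have hP_end : ∀ i, P i (m + 1) = δ - r i ∧ P i (m + 2) = δ := fun i =>
    pathSolve_end_eq (d i) (m + 1) (by rw [← moment_eq_sum_range, hr i]; push_cast; ring)
  let x := ofArms m 0 δ P
  have hx : ∀ i t, t ≤ m + 2 → x (armVertex m i t) = P i t := fun i _ =>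
    ofArms_armVertex rfl (hP_end i).2
  refine ⟨x, eq_of_sum_eq_of_forall_ne (Sum.inl 0)
    (by rw [SimpleGraph.sum_lapMatrix_mulVec, hD]) ?_⟩
  rintro (a | ⟨i, j⟩) hv
  · obtain rfl : a = 1 := by fin_cases a <;> simp_all
    have hsum : ∑ i, (m + 2 : ℤ) * r i = ∑ i, (δ - moment i D) :=
      sum_congr rfl fun i _ => (hr i).symm
    rw [← mul_sum, sum_sub_distrib, sum_const, card_univ, Fintype.card_fin, nsmul_eq_mul] at hsum
    have hpen : ∀ i, x (armVertex m i (m + 1)) = δ - r i := fun i =>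
      (hx i (m + 1) (by omega)).trans (hP_end i).1
    have hxw : x (Sum.inl 1) = δ := rfl
    have hxu : x (Sum.inl 0) = 0 := rfl
    rw [lapMatrix_mulVec_inl_one, hxw, hxu]
    simp only [hpen, sub_sub_cancel]
    apply mul_left_cancel₀ (show (m + 2 : ℤ) ≠ 0 by positivity)
    push_cast at hsum
    linear_combination hsum + hδ
  · have hj : (j : ℕ) ≤ m := Nat.lt_succ_iff.1 j.is_lt
    calc ((Hinge (m + 3) (n + 2)).lapMatrix ℤ *ᵥ x) (Sum.inr (i, j))
        = pathLaplacian (P i) j := by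
          rw [lapMatrix_mulVec_inr, pathLaplacian, pathLaplacian, hx i j (by omega),
            hx i (j + 1) (by omega), hx i (j + 2) (by omega)]
      _ = D (Sum.inr (i, j)) := by rw [pathLaplacian_pathSolve, ← armVertex_succ]

theorem mem_prin_of_invariant_eq_zero {D : HingeVertex (m + 3) (n + 2) → ℤ}
    (hD : D ∈ Div0 (HingeVertex (m + 3) (n + 2))) (h : invariant m n D = 0) :
    D ∈ Prin (Hinge (m + 3) (n + 2)) := by
  obtain ⟨q, hq⟩ := ((invariant_eq_zero_iff D).1 h).2
  rw [bigInvariant_apply] at hq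
  refine exists_lapMatrix_mulVec_eq D hD (moment 0 D + (m + 2) * q) (by linear_combination -hq)
    fun i => ?_
  rw [show moment 0 D + (m + 2) * q - moment i D = (m + 2) * q - (moment i D - moment 0 D) by ring]
  exact dvd_sub (dvd_mul_right _ _) (dvd_moment_sub_moment_zero h i)

theorem nonempty_addEquiv_criticalGroup (m n : ℕ) :
    Nonempty (CriticalGroup (Hinge (m + 3) (n + 2)) ≃+
      (Fin n → ZMod (m + 2)) × ZMod ((m + 2) * (m + n + 4))) :=
  CriticalGroup.nonempty_addEquiv_of_surjective _ (invariant m n) exists_mem_div0_invariant_eq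
    fun _ hD => ⟨mem_prin_of_invariant_eq_zero hD, by
      rintro ⟨x, rfl⟩
      exact invariant_lapMatrix_mulVec x⟩

end Hinge

/-- For all integers `k ≥ 3` and `n ≥ 2`, the critical group `K(H_{k,n})` is
isomorphic as an abelian group to `(ℤ/(k-1)ℤ)^(n-2) ⊕ ℤ/((k-1)(k+n-1))ℤ`. -/
theorem hinge_criticalGroup_structure (k n : ℕ) (hk : 3 ≤ k) (hn : 2 ≤ n) :
    Nonempty (CriticalGroup (Hinge k n) ≃+
      (Fin (n - 2) → ZMod (k - 1)) × ZMod ((k - 1) * (k + n - 1))) := by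
  obtain ⟨m, rfl⟩ : ∃ m, k = m + 3 := ⟨k - 3, by omega⟩
  obtain ⟨p, rfl⟩ : ∃ p, n = p + 2 := ⟨n - 2, by omega⟩
  rw [show m + 3 + (p + 2) - 1 = m + p + 4 by omega]
  exact Hinge.nonempty_addEquiv_criticalGroup m p
end
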